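/- arXiv:1508.02295 — 5 statements merged into one kernel-verified Lean document; each statement's English description precedes it below -/
import Mathlib

section
/- Let (P, L, I) be a finite partial linear space with no triangles, and let G be a collineation group of (P, L, I) with a normal subgroup M that acts regularly on P; identify P with M so that M acts on points by right multiplication. Let ℓ be a line incident with the identity 1 ∈ M whose setwise stabiliser M_ℓ in M is nontrivial. Then M_ℓ is contained in the point set of ℓ, and for every point h incident with ℓ the left coset hM_ℓ is contained in the point set of ℓ; thus ℓ is a union of left M_ℓ-cosets, including the trivial coset M_ℓ. -/
theorem incident_smul_of_smul_eq {G P L : Type*} [SMul G P] [SMul G L] (I : P → L → Prop)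
    (hcol : ∀ (g : G) (p : P) (l : L), I p l → I (g • p) (g • l))
    {g : G} {l : L} (hg : g • l = l) {p : P} (hp : I p l) : I (g • p) l :=
  hg ▸ hcol g p l hp

theorem stmt_1_general {M L G : Type*} [Group M]
    [Group G] [MulAction G M] [MulAction G L]
    (I : M → L → Prop)
    -- G acts by collineations
    (hcol : ∀ (g : G) (p : M) (l : L), I p l ↔ I (g • p) (g • l))
    -- M is (the image of) a normal subgroup of G acting on points by right multiplication
    (ρ : M →* G) (hρ : ∀ m x : M, (ρ m) • x = x * m)
    (l : L) (h1 : I (1 : M) l) :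
    (((MulAction.stabilizer G l).comap ρ : Set M) ⊆ {x : M | I x l}) ∧
      (∀ h : M, I h l → ∀ m ∈ (MulAction.stabilizer G l).comap ρ, I (h * m) l) := by
  have coset_subset : ∀ h : M, I h l → ∀ m ∈ (MulAction.stabilizer G l).comap ρ,
      I (h * m) l := fun h hh m hm => by
    simpa only [hρ] using incident_smul_of_smul_eq I (fun g p l => (hcol g p l).mp) hm hh
  exact ⟨fun m hm => by simpa using coset_subset 1 h1 m hm, coset_subset⟩

/-- In a finite triangle-free partial linear space with a normal point-regular
subgroup `M` of a collineation group `G` (points identified with `M`), a line `l` through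
`1` with nontrivial stabiliser `M_l` contains `M_l` and is a union of left `M_l`-cosets. -/
theorem stmt_1 {M L G : Type*} [Group M] [Fintype M] [Fintype L]
    [Group G] [MulAction G M] [MulAction G L]
    (I : M → L → Prop)
    -- any two distinct points are incident with at most one common line
    (hpls : ∀ p q : M, p ≠ q → ∀ l l' : L, I p l → I q l → I p l' → I q l' → l = l')
    -- no triangles
    (htri : ∀ p q r : M, ∀ l₁ l₂ l₃ : L, p ≠ q → q ≠ r → p ≠ r →
      l₁ ≠ l₂ → l₂ ≠ l₃ → l₁ ≠ l₃ →
      I p l₁ → I q l₁ → I q l₂ → I r l₂ → I p l₃ → I r l₃ → False)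
    -- G acts by collineations
    (hcol : ∀ (g : G) (p : M) (l : L), I p l ↔ I (g • p) (g • l))
    -- M is (the image of) a normal subgroup of G acting on points by right multiplication
    (ρ : M →* G) (hρ : ∀ m x : M, (ρ m) • x = x * m)
    (hnorm : ρ.range.Normal)
    (l : L) (h1 : I (1 : M) l)
    -- the stabiliser M_l of l in M is nontrivial
    (hstab : (MulAction.stabilizer G l).comap ρ ≠ ⊥) :
    (((MulAction.stabilizer G l).comap ρ : Set M) ⊆ {x : M | I x l}) ∧
      (∀ h : M, I h l → ∀ m ∈ (MulAction.stabilizer G l).comap ρ, I (h * m) l) :=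
  stmt_1_general I hcol ρ hρ l h1
end

section
/- Let (P, L, I) be a finite partial linear space with no triangles, and let G be a collineation group of (P, L, I) with a normal subgroup M that acts regularly on P; identify P with M so that M acts on points by right multiplication. Suppose in addition that M ⋊ Inn(M) ≤ G, i.e., for every g ∈ M the left translation x ↦ g⁻¹x of P = M is induced by an element of G. Let ℓ be a line incident with the identity 1 ∈ M whose setwise stabiliser M_ℓ in M is nontrivial. Then the point set of ℓ equals M_ℓ; in particular, the point set of ℓ is a subgroup of M. -/
/-!
Let `D` be the point set of `l` and `1 ≠ s ∈ M_l`, so that `1, s ∈ D` and `D s = D`.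
A collineation mapping two distinct points of `l` to points of `l` fixes `l`, since two lines
share at most one point. For `x ∈ D` the left translation by `x⁻¹` sends `x, x s ∈ D` to
`1, s ∈ D`, so `x⁻¹ D = D` and `D` is a subgroup; then the right translation by `x` sends
`1, s` to `x, s x ∈ D`, so `x ∈ M_l`. Conversely `m ∈ M_l` gives `m = 1 · m ∈ D`.
-/

section CollineationGroup

variable {M L G : Type*} [Group G] [MulAction G M] [MulAction G L] {I : M → L → Prop}

theorem incident_smul_of_smul_eq_self
    (hcol : ∀ (g : G) (p : M) (l : L), I p l ↔ I (g • p) (g • l))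
    {g : G} {l : L} {p : M} (hg : g • l = l) (hp : I p l) : I (g • p) l :=
  hg ▸ (hcol g p l).mp hp

theorem smul_eq_self_of_incident
    (hpls : ∀ p q : M, p ≠ q → ∀ l l' : L, I p l → I q l → I p l' → I q l' → l = l')
    (hcol : ∀ (g : G) (p : M) (l : L), I p l ↔ I (g • p) (g • l))
    {g : G} {l : L} {p q : M} (hpq : p ≠ q) (hp : I p l) (hq : I q l)
    (hgp : I (g • p) l) (hgq : I (g • q) l) : g • l = l :=
  hpls (g • p) (g • q) ((MulAction.injective g).ne hpq) _ _
    ((hcol g p l).mp hp) ((hcol g q l).mp hq) hgp hgq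

theorem incident_inv_mul_of_mem_stabilizer [Group M]
    (hpls : ∀ p q : M, p ≠ q → ∀ l l' : L, I p l → I q l → I p l' → I q l' → l = l')
    (hcol : ∀ (g : G) (p : M) (l : L), I p l ↔ I (g • p) (g • l))
    {ρ : M →* G} (hρ : ∀ m x : M, (ρ m) • x = x * m)
    (hleft : ∀ m : M, ∃ g : G, ∀ x : M, g • x = m⁻¹ * x)
    {l : L} (h1 : I (1 : M) l) {s : M} (hs1 : s ≠ 1) (hs : ρ s • l = l)
    {x y : M} (hx : I x l) (hy : I y l) : I (x⁻¹ * y) l := by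
  have hmul_s : ∀ {z : M}, I z l → I (z * s) l := fun hz ↦
    hρ s _ ▸ incident_smul_of_smul_eq_self hcol hs hz
  obtain ⟨g, hg⟩ := hleft x
  have hgl : g • l = l := by
    refine smul_eq_self_of_incident hpls hcol (p := x) (q := x * s) ?_ hx (hmul_s hx) ?_ ?_
    · simpa using hs1
    · simpa [hg] using h1
    · simpa [hg] using hmul_s h1
  simpa [hg] using incident_smul_of_smul_eq_self hcol hgl hy

end CollineationGroup

theorem stmt_2_general {M L G : Type*} [Group M]
    [Group G] [MulAction G M] [MulAction G L]
    (I : M → L → Prop)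
    -- any two distinct points are incident with at most one common line
    (hpls : ∀ p q : M, p ≠ q → ∀ l l' : L, I p l → I q l → I p l' → I q l' → l = l')
    -- G acts by collineations
    (hcol : ∀ (g : G) (p : M) (l : L), I p l ↔ I (g • p) (g • l))
    -- M is (the image of) a normal subgroup of G acting on points by right multiplication
    (ρ : M →* G) (hρ : ∀ m x : M, (ρ m) • x = x * m)
    -- every left translation of M is induced by an element of G
    (hleft : ∀ m : M, ∃ g : G, ∀ x : M, g • x = m⁻¹ * x)
    (l : L) (h1 : I (1 : M) l)
    -- the stabiliser M_l of l in M is nontrivial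
    (hstab : (MulAction.stabilizer G l).comap ρ ≠ ⊥) :
    {x : M | I x l} = (((MulAction.stabilizer G l).comap ρ : Subgroup M) : Set M) := by
  obtain ⟨⟨s, hs⟩, hs1⟩ := Subgroup.ne_bot_iff_exists_ne_one.mp hstab
  replace hs1 : s ≠ 1 := by simpa using hs1
  replace hs : ρ s • l = l := hs
  have hclosed {x y : M} : I x l → I y l → I (x⁻¹ * y) l :=
    incident_inv_mul_of_mem_stabilizer hpls hcol hρ hleft h1 hs1 hs
  have hsl : I s l := by simpa [hρ] using incident_smul_of_smul_eq_self hcol hs h1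
  ext x
  refine ⟨fun hx ↦ ?_, fun hx ↦ by simpa [hρ] using incident_smul_of_smul_eq_self hcol hx h1⟩
  refine smul_eq_self_of_incident hpls hcol hs1.symm h1 hsl (by simpa [hρ] using hx) ?_
  have hs_inv : I s⁻¹ l := by simpa using hclosed hsl h1
  simpa [hρ] using hclosed hs_inv hx

/-- As in Statement 1, but assuming additionally that all left translations
are induced by `G` (i.e. `M ⋊ Inn(M) ≤ G`): then the point set of the line `l` through `1`
equals its stabiliser `M_l`; in particular it is a subgroup of `M`. -/
theorem stmt_2 {M L G : Type*} [Group M] [Fintype M] [Fintype L]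
    [Group G] [MulAction G M] [MulAction G L]
    (I : M → L → Prop)
    -- any two distinct points are incident with at most one common line
    (hpls : ∀ p q : M, p ≠ q → ∀ l l' : L, I p l → I q l → I p l' → I q l' → l = l')
    -- no triangles
    (htri : ∀ p q r : M, ∀ l₁ l₂ l₃ : L, p ≠ q → q ≠ r → p ≠ r →
      l₁ ≠ l₂ → l₂ ≠ l₃ → l₁ ≠ l₃ →
      I p l₁ → I q l₁ → I q l₂ → I r l₂ → I p l₃ → I r l₃ → False)
    -- G acts by collineations
    (hcol : ∀ (g : G) (p : M) (l : L), I p l ↔ I (g • p) (g • l))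
    -- M is (the image of) a normal subgroup of G acting on points by right multiplication
    (ρ : M →* G) (hρ : ∀ m x : M, (ρ m) • x = x * m)
    (hnorm : ρ.range.Normal)
    -- every left translation of M is induced by an element of G
    (hleft : ∀ m : M, ∃ g : G, ∀ x : M, g • x = m⁻¹ * x)
    (l : L) (h1 : I (1 : M) l)
    -- the stabiliser M_l of l in M is nontrivial
    (hstab : (MulAction.stabilizer G l).comap ρ ≠ ⊥) :
    {x : M | I x l} = (((MulAction.stabilizer G l).comap ρ : Subgroup M) : Set M) :=
  stmt_2_general I hpls hcol ρ hρ hleft l h1 hstab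
end

section
/- Let (P, L, I) be a finite partial linear space with no triangles, and let G be a collineation group of (P, L, I) that acts transitively on L and has a normal subgroup M acting regularly on P with M ⋊ Inn(M) ≤ G; identify P with M. Suppose the action of M on L is not semiregular, i.e., some line has nontrivial setwise stabiliser in M. Then every line incident with the identity 1 ∈ M has point set equal to a subgroup of M, and for any two lines ℓ and ℓ' incident with 1 there exists an element g of the point stabiliser G₁ of 1 in G whose induced automorphism of M maps the subgroup ℓ onto the subgroup ℓ'; that is, the lines incident with 1 form a single G₁-conjugacy class of subgroups of M. -/
/-!
Since `G` is line-transitive and `M` is normal in `G`, every line `ℓ` is fixed by some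
`1 ≠ m ∈ M`, so with each point `s` it also contains `s * m`. If `1 ∈ ℓ` and `s ∈ ℓ`, the left
translation by `s` maps `ℓ` to a line through the two points `s` and `s * m` of `ℓ`, hence fixes `ℓ`;
this makes the point set of `ℓ` closed under products and inverses. For two lines `ℓ, ℓ'` through
`1`, take `g ∈ G` with `g • ℓ = ℓ'` and correct it by the left translation by `(g • 1)⁻¹`, which
fixes `ℓ'`: the product fixes `1` and, normalising `M`, acts on `M` by automorphisms.
-/

theorem image_smul_setOf_incident {M L G : Type*} [Group G] [MulAction G M] [MulAction G L]
    {I : M → L → Prop} (hcol : ∀ (g : G) (p : M) (l : L), I p l ↔ I (g • p) (g • l))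
    (g : G) (l : L) : (fun x : M => g • x) '' {x | I x l} = {x | I x (g • l)} := by
  ext x
  constructor
  · rintro ⟨a, ha, rfl⟩
    exact (hcol g a l).mp ha
  · intro hx
    refine ⟨g⁻¹ • x, (hcol g _ l).mpr ?_, smul_inv_smul g x⟩
    rwa [smul_inv_smul]

section

variable {M L G : Type*} [Group M] [Group G] [MulAction G M] [MulAction G L] {I : M → L → Prop}
  {ρ : M →* G}

theorem exists_ne_one_smul_eq_of_transitive (hρ : ∀ m x : M, (ρ m) • x = x * m)
    (hnorm : ρ.range.Normal) (htL : ∀ l l' : L, ∃ g : G, g • l = l')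
    (hnotsemi : ∃ (l₀ : L) (m : M), m ≠ 1 ∧ (ρ m) • l₀ = l₀) (l : L) :
    ∃ m : M, m ≠ 1 ∧ ρ m • l = l := by
  obtain ⟨l₀, m₀, hm₀, hfix⟩ := hnotsemi
  obtain ⟨g, rfl⟩ := htL l₀ l
  obtain ⟨m, hm⟩ := hnorm.conj_mem (ρ m₀) ⟨m₀, rfl⟩ g
  have hρinj : Function.Injective ρ := (injective_iff_map_eq_one ρ).mpr fun m h => by
    simpa [h] using (hρ m 1).symm
  refine ⟨m, fun h => hm₀ ?_, ?_⟩
  · rw [h, map_one, eq_comm, mul_inv_eq_one, mul_eq_left] at hm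
    exact hρinj (hm.trans (map_one ρ).symm)
  · rw [hm, smul_smul, inv_mul_cancel_right, mul_smul, hfix]

theorem incident_mul_of_smul_eq (hcol : ∀ (g : G) (p : M) (l : L), I p l ↔ I (g • p) (g • l))
    (hρ : ∀ m x : M, (ρ m) • x = x * m) {l : L} {m : M} (hm : ρ m • l = l) {x : M}
    (hx : I x l) : I (x * m) l := by
  simpa only [hρ, hm] using (hcol (ρ m) x l).mp hx

theorem smul_eq_self_of_smul_eq_mul_left
    (hpls : ∀ p q : M, p ≠ q → ∀ l l' : L, I p l → I q l → I p l' → I q l' → l = l')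
    (hcol : ∀ (g : G) (p : M) (l : L), I p l ↔ I (g • p) (g • l))
    (hρ : ∀ m x : M, (ρ m) • x = x * m) {l : L} (h1 : I 1 l) {m : M} (hm1 : m ≠ 1)
    (hm : ρ m • l = l) {s : M} (hs : I s l) {g : G} (hg : ∀ x, g • x = s * x) : g • l = l := by
  have hs' : I s (g • l) := by simpa only [hg, mul_one] using (hcol g 1 l).mp h1
  have hsm' : I (s * m) (g • l) := by
    simpa only [hg, one_mul] using (hcol g _ l).mp (incident_mul_of_smul_eq hcol hρ hm h1)
  exact hpls s (s * m) (fun h => hm1 (left_eq_mul.mp h)) _ _ hs' hsm' hs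
    (incident_mul_of_smul_eq hcol hρ hm hs)

def lineSubgroup
    (hpls : ∀ p q : M, p ≠ q → ∀ l l' : L, I p l → I q l → I p l' → I q l' → l = l')
    (hcol : ∀ (g : G) (p : M) (l : L), I p l ↔ I (g • p) (g • l))
    (hρ : ∀ m x : M, (ρ m) • x = x * m) (hleft : ∀ m : M, ∃ g : G, ∀ x : M, g • x = m⁻¹ * x)
    {l : L} (h1 : I 1 l) (hstab : ∃ m : M, m ≠ 1 ∧ ρ m • l = l) : Subgroup M :=
  have hfix : ∀ s, I s l → ∃ g : G, (∀ x, g • x = s * x) ∧ g • l = l := fun s hs => by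
    obtain ⟨m, hm1, hm⟩ := hstab
    obtain ⟨g, hg⟩ := hleft s⁻¹
    simp only [inv_inv] at hg
    exact ⟨g, hg, smul_eq_self_of_smul_eq_mul_left hpls hcol hρ h1 hm1 hm hs hg⟩
  { carrier := {x | I x l}
    one_mem' := h1
    mul_mem' := fun {s t} hs ht => by
      obtain ⟨g, hg, hgl⟩ := hfix s hs
      show I (s * t) l
      simpa only [hg, hgl] using (hcol g t l).mp (show I t l from ht)
    inv_mem' := fun {s} hs => by
      obtain ⟨g, hg, hgl⟩ := hfix s hs
      have hinv : g⁻¹ • (1 : M) = s⁻¹ := by rw [inv_smul_eq_iff, hg, mul_inv_cancel]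
      show I s⁻¹ l
      simpa only [hinv, inv_smul_eq_iff.mpr hgl.symm] using (hcol g⁻¹ 1 l).mp h1 }

theorem smul_mul_of_smul_one (hρ : ∀ m x : M, (ρ m) • x = x * m) (hnorm : ρ.range.Normal)
    {g : G} (hg1 : g • (1 : M) = 1) (x y : M) : g • (x * y) = (g • x) * (g • y) := by
  obtain ⟨m, hm⟩ := hnorm.conj_mem (ρ y) ⟨y, rfl⟩ g
  have hconj : ∀ z : M, g • (z * y) = (g • z) * m := fun z => by
    rw [← hρ, ← mul_smul, ← inv_mul_cancel_right (g * ρ y) g, ← hm, mul_smul, hρ]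
  have hgy : g • y = m := by simpa only [one_mul, hg1] using hconj 1
  rw [hconj, hgy]

end

theorem stmt_3_general {M L G : Type*} [Group M]
    [Group G] [MulAction G M] [MulAction G L]
    (I : M → L → Prop)
    -- any two distinct points are incident with at most one common line
    (hpls : ∀ p q : M, p ≠ q → ∀ l l' : L, I p l → I q l → I p l' → I q l' → l = l')
    -- G acts by collineations
    (hcol : ∀ (g : G) (p : M) (l : L), I p l ↔ I (g • p) (g • l))
    -- G is transitive on lines
    (htL : ∀ l l' : L, ∃ g : G, g • l = l')
    -- M is (the image of) a normal subgroup of G acting on points by right multiplication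
    (ρ : M →* G) (hρ : ∀ m x : M, (ρ m) • x = x * m)
    (hnorm : ρ.range.Normal)
    -- every left translation of M is induced by an element of G
    (hleft : ∀ m : M, ∃ g : G, ∀ x : M, g • x = m⁻¹ * x)
    -- the action of M on lines is not semiregular
    (hnotsemi : ∃ (l₀ : L) (m : M), m ≠ 1 ∧ (ρ m) • l₀ = l₀) :
    (∀ l : L, I (1 : M) l → ∃ H : Subgroup M, {x : M | I x l} = (H : Set M)) ∧
      (∀ l l' : L, I (1 : M) l → I (1 : M) l' →
        ∃ g : G, g • (1 : M) = 1 ∧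
          (∀ x y : M, g • (x * y) = (g • x) * (g • y)) ∧
          (fun x : M => g • x) '' {x : M | I x l} = {x : M | I x l'}) := by
  have hstab := exists_ne_one_smul_eq_of_transitive hρ hnorm htL hnotsemi
  refine ⟨fun l h1 => ⟨lineSubgroup hpls hcol hρ hleft h1 (hstab l), rfl⟩, ?_⟩
  intro l l' h1 h1'
  obtain ⟨g, rfl⟩ := htL l l'
  have hp : I (g • (1 : M)) (g • l) := (hcol g 1 l).mp h1
  have hpinv : I (g • (1 : M))⁻¹ (g • l) :=
    (lineSubgroup hpls hcol hρ hleft h1' (hstab _)).inv_mem hp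
  obtain ⟨h, hh⟩ := hleft (g • (1 : M))
  obtain ⟨m, hm1, hm⟩ := hstab (g • l)
  have hhl : h • g • l = g • l := smul_eq_self_of_smul_eq_mul_left hpls hcol hρ h1' hm1 hm hpinv hh
  have hg1 : (h * g) • (1 : M) = 1 := by rw [mul_smul, hh, inv_mul_cancel]
  refine ⟨h * g, hg1, smul_mul_of_smul_one hρ hnorm hg1, ?_⟩
  rw [image_smul_setOf_incident hcol, mul_smul, hhl]

/-- In a finite triangle-free partial linear space with a line-transitive
collineation group `G` having a normal point-regular subgroup `M` with `M ⋊ Inn(M) ≤ G`,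
if `M` is not semiregular on lines then every line through `1` is a subgroup of `M`, and
the lines through `1` form a single `G₁`-conjugacy class of subgroups of `M`. -/
theorem stmt_3 {M L G : Type*} [Group M] [Fintype M] [Fintype L]
    [Group G] [MulAction G M] [MulAction G L]
    (I : M → L → Prop)
    -- any two distinct points are incident with at most one common line
    (hpls : ∀ p q : M, p ≠ q → ∀ l l' : L, I p l → I q l → I p l' → I q l' → l = l')
    -- no triangles
    (htri : ∀ p q r : M, ∀ l₁ l₂ l₃ : L, p ≠ q → q ≠ r → p ≠ r →
      l₁ ≠ l₂ → l₂ ≠ l₃ → l₁ ≠ l₃ →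
      I p l₁ → I q l₁ → I q l₂ → I r l₂ → I p l₃ → I r l₃ → False)
    -- G acts by collineations
    (hcol : ∀ (g : G) (p : M) (l : L), I p l ↔ I (g • p) (g • l))
    -- G is transitive on lines
    (htL : ∀ l l' : L, ∃ g : G, g • l = l')
    -- M is (the image of) a normal subgroup of G acting on points by right multiplication
    (ρ : M →* G) (hρ : ∀ m x : M, (ρ m) • x = x * m)
    (hnorm : ρ.range.Normal)
    -- every left translation of M is induced by an element of G
    (hleft : ∀ m : M, ∃ g : G, ∀ x : M, g • x = m⁻¹ * x)
    -- the action of M on lines is not semiregular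
    (hnotsemi : ∃ (l₀ : L) (m : M), m ≠ 1 ∧ (ρ m) • l₀ = l₀) :
    (∀ l : L, I (1 : M) l → ∃ H : Subgroup M, {x : M | I x l} = (H : Set M)) ∧
      (∀ l l' : L, I (1 : M) l → I (1 : M) l' →
        ∃ g : G, g • (1 : M) = 1 ∧
          (∀ x y : M, g • (x * y) = (g • x) * (g • y)) ∧
          (fun x : M => g • x) '' {x : M | I x l} = {x : M | I x l'}) :=
  stmt_3_general I hpls hcol htL ρ hρ hnorm hleft hnotsemi
end

section
/- Let (P, L, I) be a finite thick generalised quadrangle of order (s,t), and let G be a collineation group of (P, L, I) that acts transitively on L and has a normal subgroup M acting regularly on P with M ⋊ Inn(M) ≤ G; identify P with M. Suppose M is the internal direct product of subgroups T₁, …, T_k with k ≥ 3, where the T_i are pairwise isomorphic non-Abelian finite simple groups, and suppose the conjugation action of G on M permutes the set {T₁, …, T_k} transitively. Let ℓ be a line incident with the identity 1 ∈ M, identified with its point set, which is a subgroup of M. Then M admits no internal direct product decomposition M = A × B (A, B normal subgroups of M with A ∩ B = {1} and AB = M) such that ℓ ∩ A ≠ {1} and ℓ ∩ B ≠ {1}.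 -/
/-!
Conjugation by an element of `A` fixes `1` and the points of `ℓ ∩ B`, hence fixes `ℓ`;
similarly for `B`. As `M = AB`, the point set of `ℓ` is a normal subgroup, and
by line-transitivity so is every line through `1`. Distinct lines through `1` then meet trivially,
so their points commute. Take three lines `ℓ₁, ℓ₂, ℓ₃` through `1`, points `v ≠ 1` on `ℓ₂` and
`w ≠ 1` on `ℓ₃`, and (GQ axiom) a point `q` of `ℓ₁` collinear with `vw`. Right translation by
`q⁻¹` moves the line through `vw` and `q` to a line `n` through `1` containing `vwq⁻¹`. Since
`M = T₁ × ⋯ × T_k` is centreless and each normal subgroup containing an element that fails to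
commute with `Tᵢ` contains `Tᵢ`, the point `vwq⁻¹` forces `n` to share a factor `Tᵢ` with `ℓ₂`,
and symmetrically a factor `Tⱼ` with `ℓ₃`; hence `ℓ₂ = n = ℓ₃`, a contradiction.
-/

open scoped commutatorElement

namespace Subgroup

variable {M : Type*} [Group M]

theorem center_eq_bot_of_isSimpleGroup {H : Type*} [Group H] [IsSimpleGroup H]
    (h : ∃ a b : H, a * b ≠ b * a) : center H = ⊥ := by
  refine (IsSimpleGroup.eq_bot_or_eq_top_of_normal _ inferInstance).resolve_right fun htop => ?_
  obtain ⟨a, b, hab⟩ := h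
  exact hab (mem_center_iff.mp (htop ▸ mem_top b) a)

theorem center_eq_bot_of_iSupIndep {ι : Type*} [Fintype ι] {T : ι → Subgroup M}
    (hnorm : ∀ i, (T i).Normal) (hind : iSupIndep T) (hsup : ⨆ i, T i = ⊤)
    (hcenter : ∀ i, center (T i) = ⊥) : center M = ⊥ := by
  have hcomm : Pairwise fun i j => ∀ x y : M, x ∈ T i → y ∈ T j → Commute x y :=
    fun i j hij => commute_of_normal_of_disjoint _ _ (hnorm i) (hnorm j) (hind.pairwiseDisjoint hij)
  let e : (Π i, T i) ≃* M := MulEquiv.ofBijective (noncommPiCoprod hcomm)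
    ⟨injective_noncommPiCoprod_of_iSupIndep hind,
      MonoidHom.range_eq_top.mp (noncommPiCoprod_range.trans hsup)⟩
  refine eq_bot_iff.mpr fun x hx => ?_
  have hx' : e.symm x ∈ center (Π i, T i) := MulEquivClass.apply_mem_center e.symm hx
  rw [Subgroup.center_pi] at hx'
  have : e.symm x = 1 := funext fun i => by simpa [hcenter i] using hx' i (Set.mem_univ i)
  simpa using congrArg e this

theorem exists_not_commute_of_iSup_eq_top {ι : Type*} {T : ι → Subgroup M}
    (hsup : ⨆ i, T i = ⊤) (hcenter : center M = ⊥) {x : M} (hx : x ≠ 1) :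
    ∃ i, ∃ t ∈ T i, ¬Commute x t := by
  by_contra! h
  have hle : ⨆ i, T i ≤ centralizer {x} :=
    iSup_le fun i t ht => mem_centralizer_iff.mpr fun y hy => by
      rw [Set.mem_singleton_iff.mp hy]; exact h i t ht
  refine hx (mem_bot.mp (hcenter ▸ mem_center_iff.mpr fun g => ?_))
  exact (mem_centralizer_iff.mp (hle (hsup ▸ mem_top g)) x rfl).symm

theorem le_of_not_commute {T N : Subgroup M} [T.Normal] [N.Normal] [IsSimpleGroup T]
    {x t : M} (hx : x ∈ N) (ht : t ∈ T) (hxt : ¬Commute x t) : T ≤ N := by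
  have hmem : ⁅x, t⁆ ∈ N ⊓ T := commutator_le_inf N T (commutator_mem_commutator hx ht)
  rcases IsSimpleGroup.eq_bot_or_eq_top_of_normal _ ((inferInstance : (N ⊓ T).Normal).subgroupOf T)
    with h | h
  · rw [subgroupOf_eq_bot, disjoint_def] at h
    exact absurd (commutatorElement_eq_one_iff_commute.mp (h hmem hmem.2)) hxt
  · exact (subgroupOf_eq_top.mp h).trans inf_le_left

theorem not_disjoint_of_mul_mem {ι : Type*} {T : ι → Subgroup M} (hnorm : ∀ i, (T i).Normal)
    (hsimple : ∀ i, IsSimpleGroup (T i)) (hsup : ⨆ i, T i = ⊤) (hcenter : center M = ⊥)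
    {N N' : Subgroup M} [N.Normal] [N'.Normal] {v y : M} (hv : v ∈ N') (hv1 : v ≠ 1)
    (hy : ∀ n ∈ N', Commute y n) (hvy : v * y ∈ N) : ¬Disjoint N N' := by
  obtain ⟨i, t, ht, hvt⟩ := exists_not_commute_of_iSup_eq_top hsup hcenter hv1
  have := hnorm i
  have := hsimple i
  have hTN' : T i ≤ N' := le_of_not_commute hv ht hvt
  have hyt : Commute y t := hy t (hTN' ht)
  have hTN : T i ≤ N :=
    le_of_not_commute hvy ht fun h => hvt (by simpa using h.mul_left hyt.inv_left)
  intro hdisj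
  exact (nontrivial_iff_ne_bot (T i)).mp inferInstance (le_bot_iff.mp (hdisj hTN hTN'))

end Subgroup

open Subgroup

theorem exists_collinear_of_gq {P L : Type*} {I : P → L → Prop}
    (hGQ : ∀ p l, ¬I p l → ∃! qm : P × L, I p qm.2 ∧ I qm.1 qm.2 ∧ I qm.1 l) (p : P) (l : L) :
    ∃ q m, I p m ∧ I q m ∧ I q l := by
  by_cases hp : I p l
  · exact ⟨p, l, hp, hp, hp⟩
  · obtain ⟨⟨q, m⟩, h, -⟩ := hGQ p l hp
    exact ⟨q, m, h⟩

theorem smul_line_eq_of_fixes {G P L : Type*} [SMul G P] [SMul G L] {I : P → L → Prop}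
    (hcol : ∀ (g : G) (p : P) (l : L), I p l ↔ I (g • p) (g • l))
    (hpls : ∀ p q : P, p ≠ q → ∀ l l' : L, I p l → I q l → I p l' → I q l' → l = l')
    {g : G} {p q : P} {l : L} (hpq : p ≠ q) (hp : I p l) (hq : I q l)
    (hgp : g • p = p) (hgq : g • q = q) : g • l = l :=
  hpls p q hpq _ _ (hgp ▸ (hcol g p l).mp hp) (hgq ▸ (hcol g q l).mp hq) hp hq

section Quadrangle

variable {M L G : Type*} [Group M] [Group G] [MulAction G M] [MulAction G L] {I : M → L → Prop}

theorem exists_smul_eq_conj {ρ : M →* G} (hρ : ∀ m x : M, ρ m • x = x * m)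
    (hleft : ∀ m : M, ∃ g : G, ∀ x : M, g • x = m⁻¹ * x) (m : M) :
    ∃ g : G, ∀ x, g • x = m * x * m⁻¹ := by
  obtain ⟨g, hg⟩ := hleft m⁻¹
  exact ⟨g * ρ m⁻¹, fun x => by rw [mul_smul, hρ, hg, inv_inv, mul_assoc]⟩

theorem smul_eq_smul_one_mul {ρ : M →* G} (hρ : ∀ m x : M, ρ m • x = x * m) {g : G}
    {σ : M ≃* M} (hσ : ∀ x, g * ρ x * g⁻¹ = ρ (σ x)) (x : M) : g • x = g • (1 : M) * σ x := by
  calc g • x = g • ρ x • (1 : M) := by rw [hρ, one_mul]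
    _ = (g * ρ x * g⁻¹) • g • (1 : M) := by rw [smul_smul, smul_smul, inv_mul_cancel_right]
    _ = g • (1 : M) * σ x := by rw [hσ, hρ]

theorem mem_normalizer_of_commute (hcol : ∀ (g : G) (p : M) (l : L), I p l ↔ I (g • p) (g • l))
    (hpls : ∀ p q : M, p ≠ q → ∀ l l' : L, I p l → I q l → I p l' → I q l' → l = l')
    {l : L} {H : Subgroup M} (hH : ∀ x, I x l ↔ x ∈ H) {m c : M} {g : G}
    (hg : ∀ x, g • x = m * x * m⁻¹) (hc : c ∈ H) (hc1 : c ≠ 1) (hmc : Commute m c) :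
    m ∈ normalizer (H : Set M) := by
  have hgl : g • l = l := smul_line_eq_of_fixes hcol hpls (Ne.symm hc1) ((hH 1).mpr H.one_mem)
    ((hH c).mpr hc) (by rw [hg, mul_one, mul_inv_cancel]) (by rw [hg, hmc.eq, mul_inv_cancel_right])
  refine mem_normalizer_iff.mpr fun n => ?_
  rw [← hH, ← hH, hcol g n l, hg, hgl]

theorem normal_of_isCompl_of_mem (hcol : ∀ (g : G) (p : M) (l : L), I p l ↔ I (g • p) (g • l))
    (hpls : ∀ p q : M, p ≠ q → ∀ l l' : L, I p l → I q l → I p l' → I q l' → l = l')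
    (hconj : ∀ m : M, ∃ g : G, ∀ x, g • x = m * x * m⁻¹) {l : L} {H : Subgroup M}
    (hH : ∀ x, I x l ↔ x ∈ H) {A B : Subgroup M} (hA : A.Normal) (hB : B.Normal)
    (hAB : IsCompl A B) {a b : M} (ha : a ∈ A) (haH : a ∈ H) (ha1 : a ≠ 1)
    (hb : b ∈ B) (hbH : b ∈ H) (hb1 : b ≠ 1) : H.Normal := by
  have hcomm := commute_of_normal_of_disjoint A B hA hB hAB.disjoint
  refine normalizer_eq_top_iff.mp (eq_top_iff.mpr (hAB.sup_eq_top ▸ sup_le ?_ ?_))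
  · intro m hm
    obtain ⟨g, hg⟩ := hconj m
    exact mem_normalizer_of_commute hcol hpls hH hg hbH hb1 (hcomm m b hm hb)
  · intro m hm
    obtain ⟨g, hg⟩ := hconj m
    exact mem_normalizer_of_commute hcol hpls hH hg haH ha1 (hcomm a m ha hm).symm

theorem exists_normal_of_incident_one (hcol : ∀ (g : G) (p : M) (l : L), I p l ↔ I (g • p) (g • l))
    (htL : ∀ l l' : L, ∃ g : G, g • l = l') {ρ : M →* G} (hρ : ∀ m x : M, ρ m • x = x * m)
    (hconj : ∀ g : G, ∃ σ : M ≃* M, ∀ x, g * ρ x * g⁻¹ = ρ (σ x))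
    {l : L} {H : Subgroup M} (hH : ∀ x, I x l ↔ x ∈ H) (hHn : H.Normal) {l' : L} (h1 : I 1 l') :
    ∃ N : Subgroup M, N.Normal ∧ ∀ x, I x l' ↔ x ∈ N := by
  obtain ⟨g, rfl⟩ := htL l l'
  obtain ⟨σ, hσ⟩ := hconj g
  set N := H.map σ.toMonoidHom
  have hmem : ∀ x, I x (g • l) ↔ (g • (1 : M))⁻¹ * x ∈ N := fun x => by
    rw [mem_map_equiv, ← hH, hcol g _ l, smul_eq_smul_one_mul hρ hσ, MulEquiv.apply_symm_apply,
      mul_inv_cancel_left]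
  have hc : (g • (1 : M))⁻¹ ∈ N := by simpa using (hmem 1).mp h1
  exact ⟨N, hHn.map _ σ.surjective, fun x => (hmem x).trans (N.mul_mem_cancel_left hc)⟩

theorem line_eq_of_not_disjoint
    (hpls : ∀ p q : M, p ≠ q → ∀ l l' : L, I p l → I q l → I p l' → I q l' → l = l')
    {l l' : L} (h1 : I 1 l) (h1' : I 1 l') {N N' : Subgroup M} (hN : ∀ x, I x l ↔ x ∈ N)
    (hN' : ∀ x, I x l' ↔ x ∈ N') (h : ¬Disjoint N N') : l = l' := by
  obtain ⟨x, hx, hx', hx1⟩ : ∃ x ∈ N, x ∈ N' ∧ x ≠ 1 := by simpa [disjoint_def] using h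
  exact hpls x 1 hx1 l l' ((hN x).mpr hx) h1 ((hN' x).mpr hx') h1'

theorem commute_of_incident_of_ne
    (hpls : ∀ p q : M, p ≠ q → ∀ l l' : L, I p l → I q l → I p l' → I q l' → l = l')
    (hnormal : ∀ l, I 1 l → ∃ N : Subgroup M, N.Normal ∧ ∀ x, I x l ↔ x ∈ N)
    ⦃l l' : L⦄ (h1 : I 1 l) (h1' : I 1 l') (hne : l ≠ l') ⦃x y : M⦄ (hx : I x l) (hy : I y l') :
    Commute x y := by
  obtain ⟨N, hNn, hN⟩ := hnormal l h1
  obtain ⟨N', hN'n, hN'⟩ := hnormal l' h1'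
  have hdisj : Disjoint N N' :=
    by_contra fun h => hne (line_eq_of_not_disjoint hpls h1 h1' hN hN' h)
  exact commute_of_normal_of_disjoint N N' hNn hN'n hdisj x y ((hN x).mp hx) ((hN' y).mp hy)

theorem line_eq_of_mul_incident {ι : Type*} {T : ι → Subgroup M} (hTnorm : ∀ i, (T i).Normal)
    (hTsimple : ∀ i, IsSimpleGroup (T i)) (hTsup : ⨆ i, T i = ⊤) (hcenter : center M = ⊥)
    (hpls : ∀ p q : M, p ≠ q → ∀ l l' : L, I p l → I q l → I p l' → I q l' → l = l')
    (hnormal : ∀ l, I 1 l → ∃ N : Subgroup M, N.Normal ∧ ∀ x, I x l ↔ x ∈ N)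
    {l n : L} (hl : I 1 l) (hn : I 1 n) {v y : M} (hv : I v l) (hv1 : v ≠ 1)
    (hy : ∀ x, I x l → Commute y x) (hvy : I (v * y) n) : n = l := by
  obtain ⟨N, hNn, hN⟩ := hnormal l hl
  obtain ⟨N', hN'n, hN'⟩ := hnormal n hn
  refine line_eq_of_not_disjoint hpls hn hl hN' hN ?_
  exact not_disjoint_of_mul_mem hTnorm hTsimple hTsup hcenter ((hN v).mp hv) hv1
    (fun x hx => hy x ((hN x).mpr hx)) ((hN' _).mp hvy)

theorem false_of_incident_one_normal {ι : Type*} {T : ι → Subgroup M}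
    (hTnorm : ∀ i, (T i).Normal) (hTsimple : ∀ i, IsSimpleGroup (T i)) (hTsup : ⨆ i, T i = ⊤)
    (hcenter : center M = ⊥) {s t : ℕ} (hs : 1 ≤ s) (ht : 2 ≤ t)
    (hpls : ∀ p q : M, p ≠ q → ∀ l l' : L, I p l → I q l → I p l' → I q l' → l = l')
    (hline : ∀ l : L, {p : M | I p l}.ncard = s + 1)
    (hpoint : ∀ p : M, {l : L | I p l}.ncard = t + 1)
    (hGQ : ∀ p l, ¬I p l → ∃! qm : M × L, I p qm.2 ∧ I qm.1 qm.2 ∧ I qm.1 l)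
    (hcol : ∀ (g : G) (p : M) (l : L), I p l ↔ I (g • p) (g • l))
    {ρ : M →* G} (hρ : ∀ m x : M, ρ m • x = x * m)
    (hnormal : ∀ l, I 1 l → ∃ N : Subgroup M, N.Normal ∧ ∀ x, I x l ↔ x ∈ N) : False := by
  have h3 : 2 < {l : L | I 1 l}.ncard := by rw [hpoint]; omega
  obtain ⟨l₁, hl₁, l₂, hl₂, l₃, hl₃, h12, h13, h23⟩ :=
    (Set.two_lt_ncard (Set.finite_of_ncard_pos (by omega))).mp h3
  obtain ⟨v, hv, hv1⟩ := Set.exists_ne_of_one_lt_ncard (s := {x | I x l₂}) (by rw [hline]; omega) 1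
  obtain ⟨w, hw, hw1⟩ := Set.exists_ne_of_one_lt_ncard (s := {x | I x l₃}) (by rw [hline]; omega) 1
  obtain ⟨q, m, hvwm, hqm, hq⟩ := exists_collinear_of_gq hGQ (v * w) l₁
  have hn : I 1 (ρ q⁻¹ • m) := by simpa only [hρ, mul_inv_cancel] using (hcol (ρ q⁻¹) q m).mp hqm
  have hvwq : I (v * w * q⁻¹) (ρ q⁻¹ • m) := by simpa only [hρ] using (hcol (ρ q⁻¹) _ m).mp hvwm
  have hcomm := commute_of_incident_of_ne hpls hnormal
  have hn₂ : ρ q⁻¹ • m = l₂ := line_eq_of_mul_incident hTnorm hTsimple hTsup hcenter hpls hnormal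
    hl₂ hn hv hv1 (y := w * q⁻¹)
    (fun x hx => (hcomm hl₃ hl₂ h23.symm hw hx).mul_left (hcomm hl₁ hl₂ h12 hq hx).inv_left)
    (by rwa [← mul_assoc])
  have hn₃ : ρ q⁻¹ • m = l₃ := line_eq_of_mul_incident hTnorm hTsimple hTsup hcenter hpls hnormal
    hl₃ hn hw hw1 (y := v * q⁻¹)
    (fun x hx => (hcomm hl₂ hl₃ h23 hv hx).mul_left (hcomm hl₁ hl₃ h13 hq hx).inv_left)
    (by rwa [← mul_assoc, ← (hcomm hl₂ hl₃ h23 hv hw).eq])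
  exact h23 (hn₂.symm.trans hn₃)

end Quadrangle

theorem stmt_12_general {M L G : Type*} [Group M]
    [Group G] [MulAction G M] [MulAction G L]
    (I : M → L → Prop) (s t : ℕ) (hs : 2 ≤ s) (ht : 2 ≤ t)
    -- any two distinct points are incident with at most one common line
    (hpls : ∀ p q : M, p ≠ q → ∀ l l' : L, I p l → I q l → I p l' → I q l' → l = l')
    -- every line is incident with exactly s+1 points
    (hline : ∀ l : L, {p : M | I p l}.ncard = s + 1)
    -- every point is incident with exactly t+1 lines
    (hpoint : ∀ p : M, {l : L | I p l}.ncard = t + 1)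
    -- the generalised quadrangle axiom
    (hGQ : ∀ (p : M) (l : L), ¬ I p l →
      ∃! qm : M × L, I p qm.2 ∧ I qm.1 qm.2 ∧ I qm.1 l)
    -- G acts by collineations
    (hcol : ∀ (g : G) (p : M) (l : L), I p l ↔ I (g • p) (g • l))
    -- G is transitive on lines
    (htL : ∀ l l' : L, ∃ g : G, g • l = l')
    -- M is (the image of) a normal subgroup of G acting on points by right multiplication
    (ρ : M →* G) (hρ : ∀ m x : M, (ρ m) • x = x * m)
    -- every left translation of M is induced by an element of G
    (hleft : ∀ m : M, ∃ g : G, ∀ x : M, g • x = m⁻¹ * x)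
    -- M is the internal direct product of k ≥ 3 pairwise isomorphic
    -- non-Abelian finite simple subgroups T₁, ..., T_k
    (k : ℕ) (T : Fin k → Subgroup M)
    (hTnorm : ∀ i, (T i).Normal)
    (hTindep : iSupIndep T)
    (hTsup : ⨆ i, T i = ⊤)
    (hTsimple : ∀ i, IsSimpleGroup (T i))
    (hTnab : ∀ i, ∃ a b : (T i), a * b ≠ b * a)
    -- the conjugation action of G on M permutes {T₁, ..., T_k} ...
    (hperm : ∀ g : G, ∃ σ : M ≃* M, (∀ x : M, g * ρ x * g⁻¹ = ρ (σ x)) ∧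
      ∀ i, ∃ j, (T i).map σ.toMonoidHom = T j)
    -- l is a line through 1 whose point set is a subgroup of M
    (l : L)
    (Hl : Subgroup M) (hHl : {x : M | I x l} = (Hl : Set M)) :
    ¬ ∃ A B : Subgroup M, A.Normal ∧ B.Normal ∧ A ⊓ B = ⊥ ∧ A ⊔ B = ⊤ ∧
      (∃ a : M, a ∈ A ∧ a ≠ 1 ∧ I a l) ∧ (∃ b : M, b ∈ B ∧ b ≠ 1 ∧ I b l) := by
  rintro ⟨A, B, hA, hB, hinf, hsup, ⟨a, haA, ha1, hal⟩, ⟨b, hbB, hb1, hbl⟩⟩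
  have hHl' : ∀ x, I x l ↔ x ∈ Hl := fun x => Set.ext_iff.mp hHl x
  have hHn : Hl.Normal := normal_of_isCompl_of_mem hcol hpls (exists_smul_eq_conj hρ hleft) hHl'
    hA hB (.of_eq hinf hsup) haA ((hHl' a).mp hal) ha1 hbB ((hHl' b).mp hbl) hb1
  have hcenter : center M = ⊥ := center_eq_bot_of_iSupIndep hTnorm hTindep hTsup fun i =>
    have := hTsimple i
    center_eq_bot_of_isSimpleGroup (hTnab i)
  exact false_of_incident_one_normal hTnorm hTsimple hTsup hcenter (by omega) ht hpls hline hpoint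
    hGQ hcol hρ fun l' => exists_normal_of_incident_one hcol htL hρ
      (fun g => (hperm g).imp fun _ h => h.1) hHl' hHn

/-- Claim 4.1: In the HC setting with `k ≥ 3` factors, a line `l` through
`1` (whose point set is a subgroup of `M`) admits no splitting over a direct decomposition
`M = A × B` with `l ∩ A ≠ 1 ≠ l ∩ B`. -/
theorem stmt_12 {M L G : Type*} [Group M] [Fintype M] [Fintype L]
    [Group G] [MulAction G M] [MulAction G L]
    (I : M → L → Prop) (s t : ℕ) (hs : 2 ≤ s) (ht : 2 ≤ t)
    -- any two distinct points are incident with at most one common line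
    (hpls : ∀ p q : M, p ≠ q → ∀ l l' : L, I p l → I q l → I p l' → I q l' → l = l')
    -- every line is incident with exactly s+1 points
    (hline : ∀ l : L, {p : M | I p l}.ncard = s + 1)
    -- every point is incident with exactly t+1 lines
    (hpoint : ∀ p : M, {l : L | I p l}.ncard = t + 1)
    -- the generalised quadrangle axiom
    (hGQ : ∀ (p : M) (l : L), ¬ I p l →
      ∃! qm : M × L, I p qm.2 ∧ I qm.1 qm.2 ∧ I qm.1 l)
    -- G acts by collineations
    (hcol : ∀ (g : G) (p : M) (l : L), I p l ↔ I (g • p) (g • l))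
    -- G is transitive on lines
    (htL : ∀ l l' : L, ∃ g : G, g • l = l')
    -- M is (the image of) a normal subgroup of G acting on points by right multiplication
    (ρ : M →* G) (hρ : ∀ m x : M, (ρ m) • x = x * m)
    (hnorm : ρ.range.Normal)
    -- every left translation of M is induced by an element of G
    (hleft : ∀ m : M, ∃ g : G, ∀ x : M, g • x = m⁻¹ * x)
    -- M is the internal direct product of k ≥ 3 pairwise isomorphic
    -- non-Abelian finite simple subgroups T₁, ..., T_k
    (k : ℕ) (hk : 3 ≤ k) (T : Fin k → Subgroup M)
    (hTnorm : ∀ i, (T i).Normal)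
    (hTindep : iSupIndep T)
    (hTsup : ⨆ i, T i = ⊤)
    (hTsimple : ∀ i, IsSimpleGroup (T i))
    (hTnab : ∀ i, ∃ a b : (T i), a * b ≠ b * a)
    (hTiso : ∀ i j, Nonempty ((T i) ≃* (T j)))
    -- the conjugation action of G on M permutes {T₁, ..., T_k} ...
    (hperm : ∀ g : G, ∃ σ : M ≃* M, (∀ x : M, g * ρ x * g⁻¹ = ρ (σ x)) ∧
      ∀ i, ∃ j, (T i).map σ.toMonoidHom = T j)
    -- ... transitively
    (htrans : ∀ i j, ∃ (g : G) (σ : M ≃* M), (∀ x : M, g * ρ x * g⁻¹ = ρ (σ x)) ∧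
      (T i).map σ.toMonoidHom = T j)
    -- l is a line through 1 whose point set is a subgroup of M
    (l : L) (h1 : I (1 : M) l)
    (Hl : Subgroup M) (hHl : {x : M | I x l} = (Hl : Set M)) :
    ¬ ∃ A B : Subgroup M, A.Normal ∧ B.Normal ∧ A ⊓ B = ⊥ ∧ A ⊔ B = ⊤ ∧
      (∃ a : M, a ∈ A ∧ a ≠ 1 ∧ I a l) ∧ (∃ b : M, b ∈ B ∧ b ≠ 1 ∧ I b l) :=
  stmt_12_general I s t hs ht hpls hline hpoint hGQ hcol htL ρ hρ hleft k T hTnorm hTindep hTsup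
    hTsimple hTnab hperm l Hl hHl
end

section
/- Let (P, L, I) be a finite thick generalised quadrangle of order (s,t), and let G be a collineation group of (P, L, I) that acts transitively on L and has a normal subgroup M acting regularly on P with M ⋊ Inn(M) ≤ G; identify P with M. Suppose M is the internal direct product of subgroups T₁, …, T_k with k ≥ 3, where the T_i are pairwise isomorphic non-Abelian finite simple groups, and suppose the conjugation action of G on M permutes the set {T₁, …, T_k} transitively. Let ℓ be a line incident with the identity 1 ∈ M, identified with its point set, which is a subgroup of M. Then ℓ is isomorphic to a subgroup of T₁; more precisely, there is an index i such that the projection homomorphism M → T_i (coming from the direct product decomposition) restricts to an injective homomorphism on ℓ. -/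
/-!
If no projection `M → Tᵢ` is injective on the line subgroup `H`, then each factor `Tᵢ` centralises
a nontrivial point of the line; conjugation by `Tᵢ` is a collineation fixing two points of the
line, hence the line, so `H` is normal and therefore a product of some of the factors.
Transporting it by elements of `G` that move the factors transitively yields further normal line
subgroups through `1`, pairwise meeting trivially and hence commuting. Since a generalised
quadrangle has no triangles, `ab` is not collinear with `1` when `1 ≠ a ∈ H` and `1 ≠ b ∈ B` for
two such subgroups `H ≠ B`. If `HB = M`, a third line through `1` therefore has no point besides
`1`. Otherwise there is a third such subgroup `C`; conjugation by any `w ∈ C` fixes `ab` and the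
line of `C`, hence also the projection `q ≠ 1` of `ab` onto that line, so `q` is a nontrivial
central element of the normal subgroup `C`, impossible in a product of non-abelian simple groups.
-/

open scoped commutatorElement

structure Subgroup.IsInternalDirectProduct {M ι : Type*} [Group M] (T : ι → Subgroup M) : Prop where
  normal : ∀ i, (T i).Normal
  iSupIndep : iSupIndep T
  iSup_eq_top : ⨆ i, T i = ⊤

theorem Subgroup.le_of_mem_of_not_commute {M : Type*} [Group M] {S N : Subgroup M} [hS : S.Normal]
    [hN : N.Normal] [IsSimpleGroup S] {x u : M} (hx : x ∈ N) (hu : u ∈ S) (hxu : ¬Commute x u) :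
    S ≤ N := by
  have hN' : ⁅x, u⁆ ∈ N := by
    simpa only [commutatorElement_def, mul_assoc] using
      N.mul_mem hx (hN.conj_mem _ (N.inv_mem hx) u)
  have hS' : ⁅x, u⁆ ∈ S := S.mul_mem (hS.conj_mem u hu x) (S.inv_mem hu)
  rcases (hN.subgroupOf S).eq_bot_or_eq_top with hbot | htop
  · refine absurd ?_ hxu
    rw [← commutatorElement_eq_one_iff_commute]
    have : (⟨_, hS'⟩ : S) ∈ N.subgroupOf S := mem_subgroupOf.mpr hN'
    simpa [hbot] using this
  · exact subgroupOf_eq_top.mp htop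

theorem Subgroup.center_eq_bot_of_isSimpleGroup_s13 {S : Type*} [Group S] [IsSimpleGroup S]
    (h : ∃ a b : S, a * b ≠ b * a) : center S = ⊥ := by
  refine (instNormalCenter (G := S)).eq_bot_or_eq_top.resolve_right fun htop => ?_
  obtain ⟨a, b, hab⟩ := h
  exact hab (mem_center_iff.mp (htop ▸ mem_top a) b).symm

namespace Subgroup.IsInternalDirectProduct

variable {M ι : Type*} [Group M] {T : ι → Subgroup M}

theorem pairwise_commute (hT : IsInternalDirectProduct T) :
    Pairwise fun i j => ∀ x y : M, x ∈ T i → y ∈ T j → Commute x y := fun _ _ hij =>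
  commute_of_normal_of_disjoint _ _ (hT.normal _) (hT.normal _) (hT.iSupIndep.pairwiseDisjoint hij)

section Projections

variable [Fintype ι] (hT : IsInternalDirectProduct T)

noncomputable def mulEquiv : (∀ i, T i) ≃* M :=
  MulEquiv.ofBijective (noncommPiCoprod hT.pairwise_commute)
    ⟨injective_noncommPiCoprod_of_iSupIndep hT.iSupIndep, by
      rw [← MonoidHom.range_eq_top, noncommPiCoprod_range, hT.iSup_eq_top]⟩

theorem mulEquiv_symm_of_mem [DecidableEq ι] {i : ι} {x : M} (hx : x ∈ T i) :
    hT.mulEquiv.symm x = Pi.mulSingle i ⟨x, hx⟩ :=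
  hT.mulEquiv.symm_apply_eq.mpr
    (noncommPiCoprod_mulSingle (hcomm := hT.pairwise_commute) i ⟨x, hx⟩).symm

noncomputable def proj (i : ι) : M →* T i :=
  (Pi.evalMonoidHom (fun i => T i) i).comp hT.mulEquiv.symm.toMonoidHom

theorem proj_of_mem {i : ι} {x : M} (hx : x ∈ T i) : hT.proj i x = ⟨x, hx⟩ := by
  classical
  simp [proj, hT.mulEquiv_symm_of_mem hx]

theorem proj_of_mem_of_ne {i j : ι} (hij : j ≠ i) {x : M} (hx : x ∈ T j) : hT.proj i x = 1 := by
  classical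
  simp [proj, hT.mulEquiv_symm_of_mem hx, Pi.mulSingle_eq_of_ne (Ne.symm hij)]

theorem ext_proj {x y : M} (h : ∀ i, hT.proj i x = hT.proj i y) : x = y :=
  hT.mulEquiv.symm.injective (funext h)

theorem eq_one_of_proj_eq_one {x : M} (h : ∀ i, hT.proj i x = 1) : x = 1 :=
  hT.ext_proj fun i => by rw [h, map_one]

theorem commute_of_proj_eq_one {i : ι} {x y : M} (hx : x ∈ T i) (hy : hT.proj i y = 1) :
    Commute x y := by
  refine hT.ext_proj fun j => ?_
  rcases eq_or_ne i j with rfl | hij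
  · simp [hy]
  · simp [hT.proj_of_mem_of_ne hij hx]

theorem proj_eq_one_of_commute {i : ι} (hcenter : center (T i) = ⊥) {x : M}
    (h : ∀ u ∈ T i, Commute x u) : hT.proj i x = 1 := by
  have : hT.proj i x ∈ center (T i) := mem_center_iff.mpr fun u => by
    simpa [hT.proj_of_mem u.2] using (congrArg (hT.proj i) (h u u.2)).symm
  simpa [hcenter] using this

theorem proj_eq_one_of_not_le [∀ i, IsSimpleGroup (T i)] (hcenter : ∀ i, center (T i) = ⊥)
    {N : Subgroup M} [N.Normal] {i : ι} (hi : ¬T i ≤ N) {x : M} (hx : x ∈ N) : hT.proj i x = 1 := by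
  have := hT.normal i
  by_contra hne
  exact hne (hT.proj_eq_one_of_commute (hcenter i) fun u hu => by_contra fun hxu =>
    hi (le_of_mem_of_not_commute hx hu hxu))

end Projections

variable [Fintype ι] [∀ i, IsSimpleGroup (T i)]

theorem exists_le_of_mem_of_ne_one (hT : IsInternalDirectProduct T)
    (hcenter : ∀ i, center (T i) = ⊥) {N : Subgroup M} [N.Normal] {x : M} (hx : x ∈ N)
    (hx1 : x ≠ 1) : ∃ i, T i ≤ N := by
  by_contra! h
  exact hx1 (hT.eq_one_of_proj_eq_one fun i => hT.proj_eq_one_of_not_le hcenter (h i) hx)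

theorem eq_one_of_forall_commute (hT : IsInternalDirectProduct T)
    (hcenter : ∀ i, center (T i) = ⊥) {N : Subgroup M} [N.Normal] {x : M} (hx : x ∈ N)
    (hcomm : ∀ y ∈ N, Commute x y) : x = 1 := by
  refine hT.eq_one_of_proj_eq_one fun i => ?_
  by_cases hi : T i ≤ N
  · exact hT.proj_eq_one_of_commute (hcenter i) fun u hu => hcomm u (hi hu)
  · exact hT.proj_eq_one_of_not_le hcenter hi hx

end Subgroup.IsInternalDirectProduct

theorem Set.exists_mem_ne_ne_of_two_lt_ncard {α : Type*} {s : Set α} (hs : 2 < s.ncard)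
    (a b : α) : ∃ x ∈ s, x ≠ a ∧ x ≠ b := by
  obtain ⟨x, y, z, hx, hy, hz, hxy, hxz, hyz⟩ :=
    (two_lt_ncard_iff (finite_of_ncard_pos (by omega))).mp hs
  grind

/-- The points of the incidence structure `I` are the elements of `M`; `G` acts by collineations,
`ρ m` acts as right multiplication by `m`, and every left translation is induced by `G`. -/
structure IsRegularGQ {M L G : Type*} [Group M] [Group G] [MulAction G M] [MulAction G L]
    (I : M → L → Prop) (ρ : M →* G) : Prop where
  eq_of_incident : ∀ p q : M, p ≠ q → ∀ l l' : L, I p l → I q l → I p l' → I q l' → l = l'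
  existsUnique_proj :
    ∀ (p : M) (l : L), ¬I p l → ∃! qm : M × L, I p qm.2 ∧ I qm.1 qm.2 ∧ I qm.1 l
  incident_iff_smul : ∀ (g : G) (p : M) (l : L), I p l ↔ I (g • p) (g • l)
  rho_smul : ∀ m x : M, ρ m • x = x * m
  exists_smul_eq_inv_mul : ∀ m : M, ∃ g : G, ∀ x : M, g • x = m⁻¹ * x

def IsTransitiveOnFactors {M G ι : Type*} [Group M] [Group G] (ρ : M →* G)
    (T : ι → Subgroup M) : Prop :=
  ∀ i j, ∃ (g : G) (σ : M ≃* M), (∀ x, g * ρ x * g⁻¹ = ρ (σ x)) ∧ (T i).map σ.toMonoidHom = T j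

namespace IsRegularGQ

open Subgroup

variable {M L G ι : Type*} [Group M] [Group G] [MulAction G M] [MulAction G L]
  {I : M → L → Prop} {ρ : M →* G} {H B C : Subgroup M} {l lB lC : L} {T : ι → Subgroup M}

theorem exists_smul_eq_conj (hG : IsRegularGQ I ρ) (w : M) :
    ∃ g : G, ∀ x, g • x = w⁻¹ * x * w := by
  obtain ⟨g, hg⟩ := hG.exists_smul_eq_inv_mul w
  exact ⟨g * ρ w, fun x => by rw [mul_smul, hG.rho_smul, hg, mul_assoc]⟩

theorem eq_of_collinear (hG : IsRegularGQ I ρ) {p q q' : M} {l n n' : L} (hp : ¬I p l)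
    (hpn : I p n) (hqn : I q n) (hql : I q l) (hpn' : I p n') (hqn' : I q' n') (hql' : I q' l) :
    q = q' :=
  congrArg Prod.fst <|
    (hG.existsUnique_proj p l hp).unique (y₁ := (q, n)) (y₂ := (q', n')) ⟨hpn, hqn, hql⟩
      ⟨hpn', hqn', hql'⟩

theorem eq_one_of_incident (hG : IsRegularGQ I ρ) (hl : ∀ x, I x l ↔ x ∈ H) {m : L} (hml : m ≠ l)
    (h1m : I 1 m) {x : M} (hxm : I x m) (hx : x ∈ H) : x = 1 := by
  by_contra hx1
  exact hml (hG.eq_of_incident x 1 hx1 m l hxm h1m ((hl x).mpr hx) ((hl 1).mpr H.one_mem))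

theorem ne_of_not_le (hl : ∀ x, I x l ↔ x ∈ H) (hlB : ∀ x, I x lB ↔ x ∈ B) (h : ¬B ≤ H) :
    l ≠ lB := by
  rintro rfl
  exact h fun x hx => (hl x).mp ((hlB x).mpr hx)

theorem disjoint_of_ne (hG : IsRegularGQ I ρ) (hl : ∀ x, I x l ↔ x ∈ H)
    (hlB : ∀ x, I x lB ↔ x ∈ B) (hne : l ≠ lB) : Disjoint H B :=
  disjoint_def.mpr fun hxH hxB =>
    hG.eq_one_of_incident hlB hne ((hl 1).mpr H.one_mem) ((hl _).mpr hxH) hxB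

theorem smul_eq_self_of_conj (hG : IsRegularGQ I ρ) {g : G} {w : M}
    (hg : ∀ x, g • x = w⁻¹ * x * w) (hl : ∀ x, I x l ↔ x ∈ H) {a : M} (ha : a ∈ H) (ha1 : a ≠ 1)
    (hwa : w⁻¹ * a * w ∈ H) : g • l = l := by
  have h1 : I 1 (g • l) := by
    simpa [hg] using (hG.incident_iff_smul g 1 l).mp ((hl 1).mpr H.one_mem)
  have ha' : I (w⁻¹ * a * w) (g • l) := by
    simpa [hg] using (hG.incident_iff_smul g a l).mp ((hl a).mpr ha)
  refine hG.eq_of_incident _ 1 ?_ _ _ ha' h1 ((hl _).mpr hwa) ((hl 1).mpr H.one_mem)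
  simpa using (conj_eq_one_iff (a := w⁻¹)).not.mpr ha1

theorem mem_normalizer_of_commute (hG : IsRegularGQ I ρ) (hl : ∀ x, I x l ↔ x ∈ H) {a w : M}
    (ha : a ∈ H) (ha1 : a ≠ 1) (hwa : Commute w a) : w ∈ normalizer (H : Set M) := by
  obtain ⟨g, hg⟩ := hG.exists_smul_eq_conj w
  have hgl : g • l = l := hG.smul_eq_self_of_conj hg hl ha ha1 (by rwa [hwa.inv_mul_cancel])
  refine mem_normalizer_iff''.mpr fun x => ?_
  rw [← hl, ← hl, hG.incident_iff_smul g x l, hg, hgl]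

theorem exists_incident_iff_mem_map (hG : IsRegularGQ I ρ) {g : G} {σ : M ≃* M}
    (hσ : ∀ x, g * ρ x * g⁻¹ = ρ (σ x)) (hl : ∀ x, I x l ↔ x ∈ H) :
    ∃ l' : L, ∀ x, I x l' ↔ x ∈ H.map σ.toMonoidHom := by
  obtain ⟨h, hh⟩ := hG.exists_smul_eq_inv_mul (g • (1 : M))
  have hg : ∀ y, g • y = g • (1 : M) * σ y := fun y => by
    rw [← hG.rho_smul, ← mul_smul, ← hσ, inv_mul_cancel_right, mul_smul, hG.rho_smul, one_mul]
  have key : ∀ z, I z l ↔ I (σ z) (h • g • l) := fun z => by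
    rw [hG.incident_iff_smul g z l, hG.incident_iff_smul h, hg, hh, inv_mul_cancel_left]
  exact ⟨h • g • l, fun x => by rw [mem_map_equiv, ← hl, key, MulEquiv.apply_symm_apply]⟩

theorem not_incident_one_of_mul (hG : IsRegularGQ I ρ) (hl : ∀ x, I x l ↔ x ∈ H)
    (hlB : ∀ x, I x lB ↔ x ∈ B) {a b : M} (ha : a ∈ H) (ha1 : a ≠ 1) (hb : b ∈ B) (hbH : b ∉ H)
    (hab : Commute a b) {m : L} (hm : I (a * b) m) : ¬I 1 m := by
  intro h1m
  have hpl : ¬I (a * b) l := fun h =>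
    hbH (by simpa using H.mul_mem (H.inv_mem ha) ((hl _).mp h))
  have haB : I a (ρ a • lB) := by
    simpa [hG.rho_smul] using (hG.incident_iff_smul (ρ a) 1 lB).mp ((hlB 1).mpr B.one_mem)
  have habB : I (a * b) (ρ a • lB) := by
    simpa [hG.rho_smul, hab.eq] using (hG.incident_iff_smul (ρ a) b lB).mp ((hlB b).mpr hb)
  -- `a` (via `ρ a • lB`) and `1` (via `m`) would be two points of `l` collinear with `a * b`
  exact ha1 (hG.eq_of_collinear hpl habB haB ((hl a).mpr ha) hm h1m ((hl 1).mpr H.one_mem))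

theorem commute_of_ne (hG : IsRegularGQ I ρ) [hH : H.Normal] [hB : B.Normal]
    (hl : ∀ x, I x l ↔ x ∈ H) (hlB : ∀ x, I x lB ↔ x ∈ B) (hne : l ≠ lB) {a b : M} (ha : a ∈ H)
    (hb : b ∈ B) : Commute a b :=
  commute_of_normal_of_disjoint H B hH hB (hG.disjoint_of_ne hl hlB hne) a b ha hb

theorem eq_one_of_sup_eq_top (hG : IsRegularGQ I ρ) [H.Normal] (hl : ∀ x, I x l ↔ x ∈ H)
    (hlB : ∀ x, I x lB ↔ x ∈ B) (hsup : H ⊔ B = ⊤) (hHB : Disjoint H B)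
    (hcomm : ∀ a ∈ H, ∀ b ∈ B, Commute a b) {m : L} (hml : m ≠ l) (hmlB : m ≠ lB) (h1m : I 1 m)
    {x : M} (hxm : I x m) : x = 1 := by
  obtain ⟨a, ha, b, hb, rfl⟩ : ∃ a ∈ H, ∃ b ∈ B, a * b = x := by
    have hx : x ∈ ((H ⊔ B : Subgroup M) : Set M) := by rw [hsup]; trivial
    rwa [normal_mul, Set.mem_mul] at hx
  by_cases ha1 : a = 1
  · subst ha1
    rw [one_mul] at hxm ⊢
    exact hG.eq_one_of_incident hlB hmlB h1m hxm hb
  by_cases hb1 : b = 1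
  · subst hb1
    rw [mul_one] at hxm ⊢
    exact hG.eq_one_of_incident hl hml h1m hxm ha
  exact absurd h1m (hG.not_incident_one_of_mul hl hlB ha ha1 hb
    (fun hbH => hb1 (disjoint_def.mp hHB hbH hb)) (hcomm a ha b hb) hxm)

/-- `q` is the point of the line of `C` collinear with `a * b`; conjugation by `w ∈ C` fixes both
`a * b` and that line, hence `q`. -/
theorem exists_ne_one_forall_commute (hG : IsRegularGQ I ρ) (hl : ∀ x, I x l ↔ x ∈ H)
    (hlB : ∀ x, I x lB ↔ x ∈ B) (hlC : ∀ x, I x lC ↔ x ∈ C) {a b : M} (ha : a ∈ H) (ha1 : a ≠ 1)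
    (hb : b ∈ B) (hbH : b ∉ H) (hab : Commute a b) (hpC : ∀ w ∈ C, Commute w (a * b)) :
    ∃ q ∈ C, q ≠ 1 ∧ ∀ w ∈ C, Commute w q := by
  have hp : ¬I (a * b) lC := fun h =>
    hG.not_incident_one_of_mul hl hlB ha ha1 hb hbH hab h ((hlC 1).mpr C.one_mem)
  obtain ⟨⟨q, n⟩, ⟨hpn, hqn, hqlC⟩, -⟩ := hG.existsUnique_proj _ _ hp
  have hq1 : q ≠ 1 := by
    rintro rfl
    exact hG.not_incident_one_of_mul hl hlB ha ha1 hb hbH hab hpn hqn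
  have hqC : q ∈ C := (hlC q).mp hqlC
  refine ⟨q, hqC, hq1, fun w hw => ?_⟩
  obtain ⟨g, hg⟩ := hG.exists_smul_eq_conj w
  have hgC : g • lC = lC :=
    hG.smul_eq_self_of_conj hg hlC hqC hq1 (C.mul_mem (C.mul_mem (C.inv_mem hw) hqC) hw)
  have hgp : g • (a * b) = a * b := by rw [hg, (hpC w hw).inv_mul_cancel]
  have hgq : q = w⁻¹ * q * w := by
    rw [← hg]
    refine hG.eq_of_collinear hp hpn hqn hqlC (n' := g • n) ?_ ?_ ?_
    · rw [← hgp]; exact (hG.incident_iff_smul g _ n).mp hpn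
    · exact (hG.incident_iff_smul g q n).mp hqn
    · rw [← hgC]; exact (hG.incident_iff_smul g q lC).mp hqlC
  show w * q = q * w
  nth_rewrite 1 [hgq]
  group

theorem exists_normal_line_of_le (hG : IsRegularGQ I ρ)
    (htrans : IsTransitiveOnFactors ρ T)
    (hl : ∀ x, I x l ↔ x ∈ H) [hH : H.Normal] {i : ι} (hi : T i ≤ H) (j : ι) :
    ∃ (K : Subgroup M) (lK : L), K.Normal ∧ T j ≤ K ∧ ∀ x, I x lK ↔ x ∈ K := by
  obtain ⟨g, σ, hσ, hij⟩ := htrans i j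
  obtain ⟨lK, hlK⟩ := hG.exists_incident_iff_mem_map hσ hl
  exact ⟨_, lK, hH.map _ σ.surjective, hij ▸ map_mono hi, hlK⟩

variable [Fintype ι]

theorem normal_of_forall_exists_proj_eq_one (hG : IsRegularGQ I ρ)
    (hT : IsInternalDirectProduct T) (hl : ∀ x, I x l ↔ x ∈ H)
    (h : ∀ i, ∃ a ∈ H, hT.proj i a = 1 ∧ a ≠ 1) : H.Normal := by
  rw [← normalizer_eq_top_iff, eq_top_iff, ← hT.iSup_eq_top, iSup_le_iff]
  intro i w hw
  obtain ⟨a, ha, hai, ha1⟩ := h i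
  exact hG.mem_normalizer_of_commute hl ha ha1 (hT.commute_of_proj_eq_one hw hai)

theorem false_of_three_normal_lines (hG : IsRegularGQ I ρ) (hT : IsInternalDirectProduct T)
    [∀ i, IsSimpleGroup (T i)] (hcenter : ∀ i, center (T i) = ⊥)
    (hline : ∀ m : L, 1 < {x | I x m}.ncard) [H.Normal] [B.Normal] [C.Normal]
    (hl : ∀ x, I x l ↔ x ∈ H) (hlB : ∀ x, I x lB ↔ x ∈ B)
    (hlC : ∀ x, I x lC ↔ x ∈ C) (hlB_ne : l ≠ lB) (hlC_ne : l ≠ lC) (hlBC_ne : lB ≠ lC) :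
    False := by
  obtain ⟨a, hal, ha1⟩ := Set.exists_ne_of_one_lt_ncard (hline l) 1
  obtain ⟨b, hblB, hb1⟩ := Set.exists_ne_of_one_lt_ncard (hline lB) 1
  have ha : a ∈ H := (hl a).mp hal
  have hb : b ∈ B := (hlB b).mp hblB
  obtain ⟨q, hqC, hq1, hq⟩ := hG.exists_ne_one_forall_commute hl hlB hlC ha ha1 hb
    (fun hbH => hb1 (disjoint_def.mp (hG.disjoint_of_ne hl hlB hlB_ne) hbH hb))
    (hG.commute_of_ne hl hlB hlB_ne ha hb) fun w hw =>
      ((hG.commute_of_ne hl hlC hlC_ne ha hw).mul_left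
        (hG.commute_of_ne hlB hlC hlBC_ne hb hw)).symm
  exact hq1 (hT.eq_one_of_forall_commute hcenter hqC fun y hy => (hq y hy).symm)

theorem not_normal (hG : IsRegularGQ I ρ) (hT : IsInternalDirectProduct T)
    [∀ i, IsSimpleGroup (T i)] (hcenter : ∀ i, center (T i) = ⊥)
    (htrans : IsTransitiveOnFactors ρ T)
    (hline : ∀ m : L, 1 < {x | I x m}.ncard) (hpoint : 2 < {m | I 1 m}.ncard)
    (hl : ∀ x, I x l ↔ x ∈ H) : ¬H.Normal := by
  intro hH
  obtain ⟨a, hal, ha1⟩ := Set.exists_ne_of_one_lt_ncard (hline l) 1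
  obtain ⟨i₀, hi₀⟩ := hT.exists_le_of_mem_of_ne_one hcenter ((hl a).mp hal) ha1
  obtain ⟨j, hj⟩ : ∃ j, ¬T j ≤ H := by
    by_contra! hall
    obtain ⟨n, h1n, hnl, -⟩ := Set.exists_mem_ne_ne_of_two_lt_ncard hpoint l l
    obtain ⟨x, hxn, hx1⟩ := Set.exists_ne_of_one_lt_ncard (hline n) 1
    exact hx1 (hG.eq_one_of_incident hl hnl h1n hxn (iSup_le hall (hT.iSup_eq_top ▸ mem_top x)))
  obtain ⟨B, lB, hB, hjB, hlB⟩ := hG.exists_normal_line_of_le htrans hl hi₀ j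
  have hlB_ne : l ≠ lB := ne_of_not_le hl hlB fun hBH => hj (hjB.trans hBH)
  by_cases hcase : ∀ i, T i ≤ H ∨ T i ≤ B
  · have hsup : H ⊔ B = ⊤ := by
      rw [eq_top_iff, ← hT.iSup_eq_top, iSup_le_iff]
      exact fun i => (hcase i).elim le_sup_of_le_left le_sup_of_le_right
    obtain ⟨n, h1n, hnl, hnlB⟩ := Set.exists_mem_ne_ne_of_two_lt_ncard hpoint l lB
    obtain ⟨x, hxn, hx1⟩ := Set.exists_ne_of_one_lt_ncard (hline n) 1
    exact hx1 (hG.eq_one_of_sup_eq_top hl hlB hsup (hG.disjoint_of_ne hl hlB hlB_ne)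
      (fun a ha b hb => hG.commute_of_ne hl hlB hlB_ne ha hb) hnl hnlB h1n hxn)
  push Not at hcase
  obtain ⟨i, hiH, hiB⟩ := hcase
  obtain ⟨C, lC, hC, hiC, hlC⟩ := hG.exists_normal_line_of_le htrans hl hi₀ i
  exact hG.false_of_three_normal_lines hT hcenter hline hl hlB hlC hlB_ne
    (ne_of_not_le hl hlC fun hCH => hiH (hiC.trans hCH))
    (ne_of_not_le hlB hlC fun hCB => hiB (hiC.trans hCB))

theorem exists_injOn_proj (hG : IsRegularGQ I ρ) (hT : IsInternalDirectProduct T)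
    [∀ i, IsSimpleGroup (T i)] (hcenter : ∀ i, center (T i) = ⊥)
    (htrans : IsTransitiveOnFactors ρ T)
    (hline : ∀ m : L, 1 < {x | I x m}.ncard) (hpoint : 2 < {m | I 1 m}.ncard)
    (hl : ∀ x, I x l ↔ x ∈ H) : ∃ i, Set.InjOn (hT.proj i) H := by
  by_contra! h
  simp only [Set.injOn_iff_map_eq_one, not_forall, exists_prop] at h
  exact hG.not_normal hT hcenter htrans hline hpoint hl
    (hG.normal_of_forall_exists_proj_eq_one hT hl h)

end IsRegularGQ

theorem stmt_13_general {M L G : Type*} [Group M]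
    [Group G] [MulAction G M] [MulAction G L]
    (I : M → L → Prop) (s t : ℕ) (hs : 2 ≤ s) (ht : 2 ≤ t)
    -- any two distinct points are incident with at most one common line
    (hpls : ∀ p q : M, p ≠ q → ∀ l l' : L, I p l → I q l → I p l' → I q l' → l = l')
    -- every line is incident with exactly s+1 points
    (hline : ∀ l : L, {p : M | I p l}.ncard = s + 1)
    -- every point is incident with exactly t+1 lines
    (hpoint : ∀ p : M, {l : L | I p l}.ncard = t + 1)
    -- the generalised quadrangle axiom
    (hGQ : ∀ (p : M) (l : L), ¬ I p l →
      ∃! qm : M × L, I p qm.2 ∧ I qm.1 qm.2 ∧ I qm.1 l)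
    -- G acts by collineations
    (hcol : ∀ (g : G) (p : M) (l : L), I p l ↔ I (g • p) (g • l))
    -- M is (the image of) a normal subgroup of G acting on points by right multiplication
    (ρ : M →* G) (hρ : ∀ m x : M, (ρ m) • x = x * m)
    -- every left translation of M is induced by an element of G
    (hleft : ∀ m : M, ∃ g : G, ∀ x : M, g • x = m⁻¹ * x)
    -- M is the internal direct product of k ≥ 3 pairwise isomorphic
    -- non-Abelian finite simple subgroups T₁, ..., T_k
    (k : ℕ) (T : Fin k → Subgroup M)
    (hTnorm : ∀ i, (T i).Normal)
    (hTindep : iSupIndep T)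
    (hTsup : ⨆ i, T i = ⊤)
    (hTsimple : ∀ i, IsSimpleGroup (T i))
    (hTnab : ∀ i, ∃ a b : (T i), a * b ≠ b * a)
    -- the conjugation action of G on M permutes {T₁, ..., T_k} ...
    -- ... transitively
    (htrans : ∀ i j, ∃ (g : G) (σ : M ≃* M), (∀ x : M, g * ρ x * g⁻¹ = ρ (σ x)) ∧
      (T i).map σ.toMonoidHom = T j)
    -- l is a line through 1 whose point set is a subgroup of M
    (l : L)
    (Hl : Subgroup M) (hHl : {x : M | I x l} = (Hl : Set M)) :
    ∃ i : Fin k, ∃ φ : M →* (T i),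
      (∀ x : M, ∀ hx : x ∈ T i, φ x = ⟨x, hx⟩) ∧
      (∀ j : Fin k, j ≠ i → ∀ x : M, x ∈ T j → φ x = 1) ∧
      Set.InjOn φ {x : M | I x l} := by
  have hG : IsRegularGQ I ρ := ⟨hpls, hGQ, hcol, hρ, hleft⟩
  have hT : Subgroup.IsInternalDirectProduct T := ⟨hTnorm, hTindep, hTsup⟩
  obtain ⟨i, hi⟩ := hG.exists_injOn_proj hT
    (fun i => Subgroup.center_eq_bot_of_isSimpleGroup_s13 (hTnab i)) htrans
    (fun m => by rw [hline m]; omega) (by rw [hpoint 1]; omega) (fun x => Set.ext_iff.mp hHl x)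
  exact ⟨i, hT.proj i, fun x hx => hT.proj_of_mem hx, fun j hj x hx => hT.proj_of_mem_of_ne hj hx,
    hHl ▸ hi⟩

/-- Claim 4.2: In the HC setting with `k ≥ 3` factors, a line `l` through
`1` (whose point set is a subgroup of `M`) is isomorphic to a subgroup of `T₁`: some
projection `M → Tᵢ` of the direct decomposition is injective on `l`. -/
theorem stmt_13 {M L G : Type*} [Group M] [Fintype M] [Fintype L]
    [Group G] [MulAction G M] [MulAction G L]
    (I : M → L → Prop) (s t : ℕ) (hs : 2 ≤ s) (ht : 2 ≤ t)
    -- any two distinct points are incident with at most one common line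
    (hpls : ∀ p q : M, p ≠ q → ∀ l l' : L, I p l → I q l → I p l' → I q l' → l = l')
    -- every line is incident with exactly s+1 points
    (hline : ∀ l : L, {p : M | I p l}.ncard = s + 1)
    -- every point is incident with exactly t+1 lines
    (hpoint : ∀ p : M, {l : L | I p l}.ncard = t + 1)
    -- the generalised quadrangle axiom
    (hGQ : ∀ (p : M) (l : L), ¬ I p l →
      ∃! qm : M × L, I p qm.2 ∧ I qm.1 qm.2 ∧ I qm.1 l)
    -- G acts by collineations
    (hcol : ∀ (g : G) (p : M) (l : L), I p l ↔ I (g • p) (g • l))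
    -- G is transitive on lines
    (htL : ∀ l l' : L, ∃ g : G, g • l = l')
    -- M is (the image of) a normal subgroup of G acting on points by right multiplication
    (ρ : M →* G) (hρ : ∀ m x : M, (ρ m) • x = x * m)
    (hnorm : ρ.range.Normal)
    -- every left translation of M is induced by an element of G
    (hleft : ∀ m : M, ∃ g : G, ∀ x : M, g • x = m⁻¹ * x)
    -- M is the internal direct product of k ≥ 3 pairwise isomorphic
    -- non-Abelian finite simple subgroups T₁, ..., T_k
    (k : ℕ) (hk : 3 ≤ k) (T : Fin k → Subgroup M)
    (hTnorm : ∀ i, (T i).Normal)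
    (hTindep : iSupIndep T)
    (hTsup : ⨆ i, T i = ⊤)
    (hTsimple : ∀ i, IsSimpleGroup (T i))
    (hTnab : ∀ i, ∃ a b : (T i), a * b ≠ b * a)
    (hTiso : ∀ i j, Nonempty ((T i) ≃* (T j)))
    -- the conjugation action of G on M permutes {T₁, ..., T_k} ...
    (hperm : ∀ g : G, ∃ σ : M ≃* M, (∀ x : M, g * ρ x * g⁻¹ = ρ (σ x)) ∧
      ∀ i, ∃ j, (T i).map σ.toMonoidHom = T j)
    -- ... transitively
    (htrans : ∀ i j, ∃ (g : G) (σ : M ≃* M), (∀ x : M, g * ρ x * g⁻¹ = ρ (σ x)) ∧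
      (T i).map σ.toMonoidHom = T j)
    -- l is a line through 1 whose point set is a subgroup of M
    (l : L) (h1 : I (1 : M) l)
    (Hl : Subgroup M) (hHl : {x : M | I x l} = (Hl : Set M)) :
    ∃ i : Fin k, ∃ φ : M →* (T i),
      (∀ x : M, ∀ hx : x ∈ T i, φ x = ⟨x, hx⟩) ∧
      (∀ j : Fin k, j ≠ i → ∀ x : M, x ∈ T j → φ x = 1) ∧
      Set.InjOn φ {x : M | I x l} :=
  stmt_13_general I s t hs ht hpls hline hpoint hGQ hcol ρ hρ hleft k T hTnorm hTindep hTsup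
    hTsimple hTnab htrans l Hl hHl
end
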